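/- arXiv:2505.19904 — 2 statements merged into one kernel-verified Lean document; each statement's English description precedes it below -/
import Mathlib

section
/- In the coarse-grained perturbative setup with ∫_ℝ |f(t)| dt ≤ π/(2η), assume γ > 4π‖V‖/η. Then for each k the series Σ_{j=0}^∞ γ^{−j} Ω_k^{(j)} converges absolutely in operator norm to a bounded operator Ω_k, and the Bloch wave operator Ω = Σ_{k=1}^m Ω_k satisfies ‖Ω − 1‖ ≤ δ(‖V‖/(γη)) < 1, where δ(x) = (1 − √(1 − 4πx))² / (4πx). -/
open ContinuousLinearMap MeasureTheory

/-- `uexp A t` is the unitary group `e^{-itA}` generated by a bounded operator `A`. -/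
noncomputable def uexp {𝓗 : Type*} [NormedAddCommGroup 𝓗] [InnerProductSpace ℂ 𝓗]
    [CompleteSpace 𝓗] (A : 𝓗 →L[ℂ] 𝓗) (t : ℝ) : 𝓗 →L[ℂ] 𝓗 :=
  NormedSpace.exp ((-(t : ℂ) * Complex.I) • A)

/-- Restriction of a bounded operator to an invariant submodule. -/
noncomputable def restrictOp {𝓗 : Type*} [NormedAddCommGroup 𝓗] [InnerProductSpace ℂ 𝓗]
    [CompleteSpace 𝓗] (A : 𝓗 →L[ℂ] 𝓗) (K : Submodule ℂ 𝓗) (h : ∀ x ∈ K, A x ∈ K) :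
    K →L[ℂ] K where
  toLinearMap := (A : 𝓗 →ₗ[ℂ] 𝓗).restrict h
  cont := (A.continuous.comp continuous_subtype_val).subtype_mk _


open Finset


open ContinuousLinearMap MeasureTheory Finset

section CatalanAux

lemma catalan_le_succ (n : ℕ) : catalan n ≤ catalan (n + 1) := by
  rw [catalan_succ']
  calc catalan n = catalan 0 * catalan n := by simp
  _ ≤ ∑ ij ∈ Finset.HasAntidiagonal.antidiagonal n, catalan ij.1 * catalan ij.2 :=
    Finset.single_le_sum (f := fun ij : ℕ × ℕ => catalan ij.1 * catalan ij.2)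
      (fun i _ => Nat.zero_le _) (a := (0, n)) (by simp)

lemma catalan_succ_range (n : ℕ) :
    catalan (n + 1) = ∑ i ∈ range (n + 1), catalan i * catalan (n - i) := by
  rw [catalan_succ', Finset.Nat.sum_antidiagonal_eq_sum_range_succ
    (fun x y => catalan x * catalan y) n]

lemma trunc_cauchy (c : ℕ → ℝ) (hc : ∀ i, 0 ≤ c i) (N : ℕ) :
    ∑ j ∈ range (N + 1), ∑ i ∈ range (j + 1), c i * c (j - i)
      ≤ (∑ i ∈ range (N + 1), c i) ^ 2 := by
  have h1 : ∑ j ∈ range (N + 1), ∑ i ∈ range (j + 1), c i * c (j - i)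
      = ∑ p ∈ (range (N + 1) ×ˢ range (N + 1)).filter (fun p => p.1 + p.2 ≤ N),
          c p.1 * c p.2 := by
    rw [Finset.sum_sigma']
    refine Finset.sum_nbij' (fun p => (p.2, p.1 - p.2)) (fun p => ⟨p.1 + p.2, p.1⟩)
      ?_ ?_ ?_ ?_ ?_
    · rintro ⟨j, i⟩ h
      simp only [Finset.mem_sigma, Finset.mem_range] at h
      simp only [Finset.mem_filter, Finset.mem_product, Finset.mem_range]
      omega
    · rintro ⟨a, b⟩ h
      simp only [Finset.mem_filter, Finset.mem_product, Finset.mem_range] at h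
      simp only [Finset.mem_sigma, Finset.mem_range]
      omega
    · rintro ⟨j, i⟩ h
      simp only [Finset.mem_sigma, Finset.mem_range] at h
      simp only [Sigma.mk.inj_iff]
      exact ⟨by omega, heq_of_eq rfl⟩
    · rintro ⟨a, b⟩ h
      simp
    · rintro ⟨j, i⟩ h
      rfl
  rw [h1, sq, Finset.sum_mul_sum, ← Finset.sum_product']
  refine Finset.sum_le_sum_of_subset_of_nonneg (Finset.filter_subset _ _) ?_
  intro p _ _
  exact mul_nonneg (hc _) (hc _)

lemma catalan_partial_le {u : ℝ} (hu : 0 ≤ u) (h4 : 4 * u ≤ 1) (N : ℕ) :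
    ∑ j ∈ range N, (catalan j : ℝ) * u ^ j ≤ 2 / (1 + Real.sqrt (1 - 4 * u)) := by
  set s := Real.sqrt (1 - 4 * u) with hs
  have hs0 : 0 ≤ s := Real.sqrt_nonneg _
  have hs2 : s ^ 2 = 1 - 4 * u := Real.sq_sqrt (by linarith)
  set G := 2 / (1 + s) with hG
  have hposd : 0 < 1 + s := by linarith
  have hG1 : 1 ≤ G := by
    rw [hG, le_div_iff₀ hposd]; nlinarith
  have hfix : 1 + u * G ^ 2 = G := by
    rw [hG]; field_simp; nlinarith
  set c : ℕ → ℝ := fun i => (catalan i : ℝ) * u ^ i with hc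
  have hcnn : ∀ i, 0 ≤ c i := fun i => by
    simp only [hc]; positivity
  have hc0 : c 0 = 1 := by simp [hc]
  have hcs : ∀ j, c (j + 1) = u * ∑ i ∈ range (j + 1), c i * c (j - i) := by
    intro j
    rw [Finset.mul_sum]
    have : ∀ i ∈ range (j + 1), u * (c i * c (j - i))
        = ((catalan i : ℝ) * (catalan (j - i) : ℝ)) * u ^ (j + 1) := by
      intro i hi
      rw [Finset.mem_range] at hi
      have hp : u ^ i * u ^ (j - i) * u = u ^ (j + 1) := by
        rw [← pow_add, ← pow_succ]
        congr 1
        omega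
      simp only [hc]
      calc u * ((catalan i : ℝ) * u ^ i * ((catalan (j - i) : ℝ) * u ^ (j - i)))
          = (catalan i : ℝ) * (catalan (j - i) : ℝ) * (u ^ i * u ^ (j - i) * u) := by ring
        _ = (catalan i : ℝ) * (catalan (j - i) : ℝ) * u ^ (j + 1) := by rw [hp]
    rw [Finset.sum_congr rfl this, ← Finset.sum_mul]
    simp only [hc]
    congr 1
    rw [catalan_succ_range j]
    push_cast
    rfl
  induction N with
  | zero => simp only [Finset.range_zero, Finset.sum_empty]; linarith
  | succ N ih =>
    have hexp : ∑ j ∈ range (N + 1), c j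
        = 1 + u * ∑ j ∈ range N, ∑ i ∈ range (j + 1), c i * c (j - i) := by
      rw [Finset.sum_range_succ' c N, hc0, Finset.mul_sum]
      rw [Finset.sum_congr rfl (fun j _ => hcs j)]
      ring
    rw [hexp]
    rcases Nat.eq_zero_or_pos N with hN | hN
    · subst hN
      simp only [Finset.range_zero, Finset.sum_empty, mul_zero, add_zero]
      exact hG1
    · obtain ⟨M, rfl⟩ : ∃ M, N = M + 1 := ⟨N - 1, by omega⟩
      have hT : ∑ j ∈ range (M + 1), ∑ i ∈ range (j + 1), c i * c (j - i)
          ≤ (∑ i ∈ range (M + 1), c i) ^ 2 := trunc_cauchy c hcnn M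
      have hsum_nn : 0 ≤ ∑ i ∈ range (M + 1), c i :=
        Finset.sum_nonneg fun i _ => hcnn i
      have h2 : (∑ i ∈ range (M + 1), c i) ^ 2 ≤ G ^ 2 :=
        pow_le_pow_left₀ hsum_nn ih 2
      nlinarith [mul_le_mul_of_nonneg_left (hT.trans h2) hu]

lemma catalan_rec_bound (β : ℝ) (hβ : 0 ≤ β) (w : ℕ → ℝ) (hw0 : w 0 ≤ 1) (hwnn : ∀ j, 0 ≤ w j)
    (hrec : ∀ j, w (j + 1) ≤ β / 2 * (2 * w j + ∑ i ∈ Finset.Icc 1 j, w i * w (j - i))) :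
    ∀ j, w j ≤ β ^ j * catalan j := by
  intro j
  induction j using Nat.strong_induction_on with
  | _ j ih =>
    match j with
    | 0 => simpa using hw0
    | j + 1 =>
      have h1 : ∑ i ∈ Finset.Icc 1 j, w i * w (j - i)
          ≤ ∑ i ∈ Finset.Icc 1 j, β ^ j * ((catalan i : ℝ) * (catalan (j - i) : ℝ)) := by
        refine Finset.sum_le_sum fun i hi => ?_
        rw [Finset.mem_Icc] at hi
        have hb : β ^ i * β ^ (j - i) = β ^ j := by
          rw [← pow_add]; congr 1; omega
        calc w i * w (j - i) ≤ (β ^ i * catalan i) * (β ^ (j - i) * catalan (j - i)) :=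
              mul_le_mul (ih i (by omega)) (ih (j - i) (by omega)) (hwnn _) (by positivity)
          _ = β ^ i * β ^ (j - i) * ((catalan i : ℝ) * (catalan (j - i) : ℝ)) := by ring
          _ = β ^ j * ((catalan i : ℝ) * (catalan (j - i) : ℝ)) := by rw [hb]
      have hIcc : ∑ i ∈ Finset.Icc 1 j, (catalan i : ℝ) * (catalan (j - i) : ℝ)
          = (catalan (j + 1) : ℝ) - (catalan j : ℝ) := by
        have hcast : (catalan (j + 1) : ℝ)
            = ∑ i ∈ Finset.range (j + 1), (catalan i : ℝ) * (catalan (j - i) : ℝ) := by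
          rw [catalan_succ_range j]; push_cast; rfl
        rw [Finset.range_eq_Ico, Finset.sum_eq_sum_Ico_succ_bot (by omega)] at hcast
        rw [Finset.Ico_add_one_right_eq_Icc] at hcast
        simp only [catalan_zero, Nat.cast_one, Nat.sub_zero, one_mul] at hcast
        linarith
      have hsum : ∑ i ∈ Finset.Icc 1 j, w i * w (j - i)
          ≤ β ^ j * ((catalan (j + 1) : ℝ) - (catalan j : ℝ)) := by
        rw [← Finset.mul_sum, ← hIcc] at *
        exact h1
      have hle : (catalan j : ℝ) ≤ (catalan (j + 1) : ℝ) := by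
        exact_mod_cast catalan_le_succ j
      have hbp : (0:ℝ) ≤ β ^ j := by positivity
      calc w (j + 1) ≤ β / 2 * (2 * w j + ∑ i ∈ Finset.Icc 1 j, w i * w (j - i)) := hrec j
        _ ≤ β / 2 * (2 * (β ^ j * catalan j)
              + β ^ j * ((catalan (j + 1) : ℝ) - (catalan j : ℝ))) := by
            have := ih j (by omega)
            have h2 : 2 * w j ≤ 2 * (β ^ j * catalan j) := by linarith
            nlinarith [hsum]
        _ = β ^ (j + 1) / 2 * ((catalan j : ℝ) + (catalan (j + 1) : ℝ)) := by ring
        _ ≤ β ^ (j + 1) / 2 * ((catalan (j + 1) : ℝ) + (catalan (j + 1) : ℝ)) := by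
            have : (0:ℝ) ≤ β ^ (j + 1) / 2 := by positivity
            nlinarith
        _ = β ^ (j + 1) * catalan (j + 1) := by ring

section OpAux

variable {𝓗 : Type*} [NormedAddCommGroup 𝓗] [InnerProductSpace ℂ 𝓗] [CompleteSpace 𝓗]

local notation "E" => 𝓗 →L[ℂ] 𝓗

lemma norm_one_le' : ‖(1 : E)‖ ≤ 1 := by
  rw [ContinuousLinearMap.one_def]; exact ContinuousLinearMap.norm_id_le

lemma norm_proj_le (P : E) (h1 : adjoint P = P) (h2 : P * P = P) : ‖P‖ ≤ 1 := by
  have h := CStarRing.norm_star_mul_self (x := P)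
  rw [ContinuousLinearMap.star_eq_adjoint, h1, h2] at h
  nlinarith [norm_nonneg P]

lemma uexp_mem_unitary (A : E) (hA : IsSelfAdjoint A) (t : ℝ) : uexp A t ∈ unitary E := by
  let _ : NormedAlgebra ℚ E := .restrictScalars ℚ ℂ E
  apply NormedSpace.exp_mem_unitary_of_mem_skewAdjoint
  rw [skewAdjoint.mem_iff, star_smul, hA.star_eq, star_mul', Complex.star_def, ← neg_smul]
  congr 1
  simp [Complex.ext_iff]

lemma norm_uexp_le (A : E) (hA : IsSelfAdjoint A) (t : ℝ) : ‖uexp A t‖ ≤ 1 := by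
  have h := uexp_mem_unitary A hA t
  have h1 : star (uexp A t) * uexp A t = 1 := (Unitary.mem_iff.mp h).1
  have h2 := CStarRing.norm_star_mul_self (x := uexp A t)
  rw [h1] at h2
  nlinarith [norm_nonneg (uexp A t), norm_one_le' (𝓗 := 𝓗)]

lemma uexp_comm (A : E) (B : E) (h : B * A = A * B) (t : ℝ) :
    B * uexp A t = uexp A t * B := by
  have hBA : Commute B A := h
  have : Commute B ((-(t : ℂ) * Complex.I) • A) := hBA.smul_right _
  exact this.exp_right.eq

lemma uexp_continuous (A : E) : Continuous fun t : ℝ => uexp A t := by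
  let _ : NormedAlgebra ℚ E := .restrictScalars ℚ ℂ E
  apply NormedSpace.exp_continuous.comp
  fun_prop

lemma norm_conj_le (A : E) (hA : IsSelfAdjoint A) (t : ℝ) (M : E) :
    ‖uexp A t * M * uexp A (-t)‖ ≤ ‖M‖ := by
  calc ‖uexp A t * M * uexp A (-t)‖ ≤ ‖uexp A t * M‖ * ‖uexp A (-t)‖ := norm_mul_le _ _
    _ ≤ ‖uexp A t * M‖ * 1 := by
        have := norm_uexp_le A hA (-t)
        have h0 : (0:ℝ) ≤ ‖uexp A t * M‖ := norm_nonneg _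
        nlinarith
    _ = ‖uexp A t * M‖ := mul_one _
    _ ≤ ‖uexp A t‖ * ‖M‖ := norm_mul_le _ _
    _ ≤ 1 * ‖M‖ := by
        have := norm_uexp_le A hA t
        have h0 : (0:ℝ) ≤ ‖M‖ := norm_nonneg _
        nlinarith
    _ = ‖M‖ := one_mul _

set_option synthInstance.maxHeartbeats 1000000 in
lemma integrable_conj (A : E) (hA : IsSelfAdjoint A) {f : ℝ → ℂ} (hf : Integrable f) (M : E) :
    Integrable fun t : ℝ => f t • (uexp A t * M * uexp A (-t)) := by
  have hg : Continuous fun t : ℝ => uexp A t * M * uexp A (-t) := by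
    apply Continuous.mul
    · exact (uexp_continuous A).mul continuous_const
    · exact (uexp_continuous A).comp continuous_neg
  refine Integrable.mono' (hf.norm.mul_const ‖M‖)
    (hf.aestronglyMeasurable.smul hg.aestronglyMeasurable) ?_
  filter_upwards with t
  rw [norm_smul]
  exact mul_le_mul_of_nonneg_left (norm_conj_le A hA t M) (norm_nonneg _)

lemma norm_integral_conj_le (A : E) (hA : IsSelfAdjoint A) {f : ℝ → ℂ} (hf : Integrable f)
    (M : E) :
    ‖∫ t : ℝ, f t • (uexp A t * M * uexp A (-t))‖ ≤ (∫ t : ℝ, ‖f t‖) * ‖M‖ := by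
  calc ‖∫ t : ℝ, f t • (uexp A t * M * uexp A (-t))‖
      ≤ ∫ t : ℝ, ‖f t • (uexp A t * M * uexp A (-t))‖ := norm_integral_le_integral_norm _
    _ ≤ ∫ t : ℝ, ‖f t‖ * ‖M‖ := by
        refine integral_mono (integrable_conj A hA hf M).norm (hf.norm.mul_const ‖M‖) ?_
        intro t
        dsimp only
        rw [norm_smul]
        exact mul_le_mul_of_nonneg_left (norm_conj_le A hA t M) (norm_nonneg _)
    _ = (∫ t : ℝ, ‖f t‖) * ‖M‖ := integral_mul_const _ _

lemma mul_integral {F : ℝ → E} (hF : Integrable F) (B : E) :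
    B * (∫ t : ℝ, F t) = ∫ t : ℝ, B * F t := by
  have := (ContinuousLinearMap.integral_comp_comm (ContinuousLinearMap.mul ℂ E B) hF).symm
  simpa using this

lemma integral_mul {F : ℝ → E} (hF : Integrable F) (B : E) :
    (∫ t : ℝ, F t) * B = ∫ t : ℝ, F t * B := by
  have := (ContinuousLinearMap.integral_comp_comm
    ((ContinuousLinearMap.mul ℂ E).flip B) hF).symm
  simpa using this

end OpAux


section BlockAux

variable {𝓗 : Type*} [NormedAddCommGroup 𝓗] [InnerProductSpace ℂ 𝓗] [CompleteSpace 𝓗]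

local notation "E" => 𝓗 →L[ℂ] 𝓗
local notation "⟪" x ", " y "⟫" => @inner ℂ _ _ x y

lemma proj_inner_eq {P : E} (hP : adjoint P = P) (a b : 𝓗) :
    ⟪P a, b⟫ = ⟪a, P b⟫ := by
  conv_lhs => rw [← hP]
  exact ContinuousLinearMap.adjoint_inner_left P b a

lemma norm_blockdiag_le {m : ℕ} (P : Fin m → E)
    (hP_adj : ∀ k, adjoint (P k) = P k)
    (hP_mul : ∀ k l, P k * P l = if k = l then P k else 0)
    (hP_sum : ∑ k, P k = 1) (W : E) :
    ‖∑ k, P k * W * P k‖ ≤ ‖W‖ := by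
  have hPle : ∀ k, ∀ y : 𝓗, ‖P k y‖ ≤ ‖y‖ := by
    intro k y
    have h1 := norm_proj_le (P k) (hP_adj k) (by simpa using hP_mul k k)
    calc ‖P k y‖ ≤ ‖P k‖ * ‖y‖ := le_opNorm _ _
      _ ≤ 1 * ‖y‖ := mul_le_mul_of_nonneg_right h1 (norm_nonneg y)
      _ = ‖y‖ := one_mul _
  refine opNorm_le_bound _ (norm_nonneg W) fun x => ?_
  set u : Fin m → 𝓗 := fun k => P k (W (P k x)) with hu
  have happ : (∑ k, P k * W * P k) x = ∑ k, u k := by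
    rw [ContinuousLinearMap.sum_apply]
    rfl
  -- orthogonality of the u k
  have horth : ∀ k l, k ≠ l → ⟪u k, u l⟫ = 0 := by
    intro k l hkl
    rw [hu]
    dsimp only
    rw [proj_inner_eq (hP_adj k)]
    have h2 : P k (P l (W (P l x))) = (P k * P l) (W (P l x)) := rfl
    rw [h2, hP_mul k l, if_neg hkl]
    simp
  have hsq : ‖∑ k, u k‖ ^ 2 = ∑ k, ‖u k‖ ^ 2 := by
    have h3 : ⟪∑ k, u k, ∑ k, u k⟫ = ∑ k, ⟪u k, u k⟫ := by
      rw [sum_inner]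
      refine Finset.sum_congr rfl fun k _ => ?_
      rw [inner_sum]
      rw [Finset.sum_eq_single k]
      · intro l _ hlk
        exact horth k l (Ne.symm hlk) ▸ horth k l (Ne.symm hlk)
      · intro h; exact absurd (Finset.mem_univ k) h
    have h4 := congrArg (RCLike.re (K := ℂ)) h3
    rw [inner_self_eq_norm_sq (𝕜 := ℂ)] at h4
    rw [h4, map_sum]
    exact Finset.sum_congr rfl fun k _ => inner_self_eq_norm_sq (𝕜 := ℂ) (u k)
  have hparseval : ∑ k, ‖P k x‖ ^ 2 = ‖x‖ ^ 2 := by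
    have h5 : ∀ k, (‖P k x‖ : ℝ) ^ 2 = RCLike.re (K := ℂ) ⟪x, P k x⟫ := by
      intro k
      rw [← inner_self_eq_norm_sq (𝕜 := ℂ) (P k x)]
      congr 1
      rw [proj_inner_eq (hP_adj k)]
      have : P k (P k x) = (P k * P k) x := rfl
      rw [this, hP_mul k k, if_pos rfl]
    have h6 : ∑ k, RCLike.re (K := ℂ) ⟪x, P k x⟫ = RCLike.re (K := ℂ) ⟪x, x⟫ := by
      rw [← map_sum, ← inner_sum]
      congr 2
      have : ∑ k, P k x = (∑ k, P k) x := (ContinuousLinearMap.sum_apply _ _ _).symm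
      rw [this, hP_sum]
      rfl
    rw [Finset.sum_congr rfl fun k _ => h5 k, h6, inner_self_eq_norm_sq (𝕜 := ℂ)]
  have hterm : ∀ k, ‖u k‖ ^ 2 ≤ ‖W‖ ^ 2 * ‖P k x‖ ^ 2 := by
    intro k
    have : ‖u k‖ ≤ ‖W‖ * ‖P k x‖ := by
      calc ‖u k‖ ≤ ‖W (P k x)‖ := hPle k _
        _ ≤ ‖W‖ * ‖P k x‖ := le_opNorm _ _
    nlinarith [norm_nonneg (u k), norm_nonneg (W (P k x))]
  have hfinal : ‖(∑ k, P k * W * P k) x‖ ^ 2 ≤ (‖W‖ * ‖x‖) ^ 2 := by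
    rw [happ, hsq]
    calc ∑ k, ‖u k‖ ^ 2 ≤ ∑ k, ‖W‖ ^ 2 * ‖P k x‖ ^ 2 := Finset.sum_le_sum fun k _ => hterm k
      _ = ‖W‖ ^ 2 * ∑ k, ‖P k x‖ ^ 2 := by rw [Finset.mul_sum]
      _ = ‖W‖ ^ 2 * ‖x‖ ^ 2 := by rw [hparseval]
      _ = (‖W‖ * ‖x‖) ^ 2 := by ring
  have := Real.sqrt_le_sqrt hfinal
  rwa [Real.sqrt_sq (norm_nonneg _), Real.sqrt_sq (by positivity)] at this

end BlockAux

set_option maxHeartbeats 1600000 in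
/-- **Convergence of the Bloch series and proximity of the Bloch wave operator to the
identity.** In the coarse-grained perturbative setup with `∫ |f(t)| dt ≤ π/(2η)` and
`γ > 4π‖V‖/η`, for each `k` the series `∑_j γ^{-j} Ω k j` converges absolutely in operator
norm, and the Bloch wave operator `Ω = ∑ k ∑'_j γ^{-j} Ω k j` satisfies
`‖Ω - 1‖ ≤ δ(‖V‖/(γη)) < 1` with `δ(x) = (1 - √(1 - 4πx))²/(4πx)`. -/
theorem bloch_wave_operator_close_to_identity
    {𝓗 : Type*} [NormedAddCommGroup 𝓗] [InnerProductSpace ℂ 𝓗] [CompleteSpace 𝓗]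
    (m : ℕ) (H0 V : 𝓗 →L[ℂ] 𝓗) (hH0 : IsSelfAdjoint H0) (hV : IsSelfAdjoint V)
    (P : Fin m → 𝓗 →L[ℂ] 𝓗)
    (hP_adj : ∀ k, adjoint (P k) = P k)
    (hP_mul : ∀ k l, P k * P l = if k = l then P k else 0)
    (hP_sum : ∑ k, P k = 1)
    (hP_comm : ∀ k, P k * H0 = H0 * P k)
    (hinvP : ∀ k, ∀ x ∈ LinearMap.range ((P k : 𝓗 →ₗ[ℂ] 𝓗)), H0 x ∈ LinearMap.range ((P k : 𝓗 →ₗ[ℂ] 𝓗)))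
    (hinvQ : ∀ k, ∀ x ∈ LinearMap.range (((1 - P k : 𝓗 →L[ℂ] 𝓗) : 𝓗 →ₗ[ℂ] 𝓗)), H0 x ∈ LinearMap.range (((1 - P k : 𝓗 →L[ℂ] 𝓗) : 𝓗 →ₗ[ℂ] 𝓗)))
    (η : ℝ) (hη : 0 < η)
    (hgap : ∀ k, ∀ a ∈ spectrum ℂ (restrictOp H0 (LinearMap.range ((P k : 𝓗 →ₗ[ℂ] 𝓗))) (hinvP k)),
      ∀ b ∈ spectrum ℂ (restrictOp H0 (LinearMap.range (((1 - P k : 𝓗 →L[ℂ] 𝓗) : 𝓗 →ₗ[ℂ] 𝓗))) (hinvQ k)), η ≤ ‖a - b‖)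
    (f : ℝ → ℂ) (hf : Integrable f)
    (hfourier : ∀ s : ℝ, η ≤ |s| →
      ∫ t : ℝ, f t * Complex.exp (-(s : ℂ) * (t : ℂ) * Complex.I) = (s : ℂ)⁻¹)
    (hf_L1 : ∫ t : ℝ, ‖f t‖ ≤ Real.pi / (2 * η))
    (Ω : Fin m → ℕ → 𝓗 →L[ℂ] 𝓗)
    (hΩ0 : ∀ k, Ω k 0 = P k)
    (hΩrec : ∀ k j, Ω k (j + 1) =
      ∫ t : ℝ, f t • (uexp H0 t *
        ((1 - P k) *
          (-(V * Ω k j) + ∑ i ∈ Finset.Icc 1 j, Ω k i * V * Ω k (j - i)) * P k) *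
        uexp H0 (-t)))
    (γ : ℝ) (hγ : γ > 4 * Real.pi * ‖V‖ / η) :
    (∀ k, Summable fun j : ℕ => ‖((γ : ℂ) ^ j)⁻¹ • Ω k j‖) ∧
    (∀ k, Summable fun j : ℕ => ((γ : ℂ) ^ j)⁻¹ • Ω k j) ∧
    ‖(∑ k, ∑' j : ℕ, ((γ : ℂ) ^ j)⁻¹ • Ω k j) - 1‖ ≤
      (1 - Real.sqrt (1 - 4 * Real.pi * (‖V‖ / (γ * η)))) ^ 2 /
        (4 * Real.pi * (‖V‖ / (γ * η))) ∧
    (1 - Real.sqrt (1 - 4 * Real.pi * (‖V‖ / (γ * η)))) ^ 2 /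
        (4 * Real.pi * (‖V‖ / (γ * η))) < 1 := by
  classical
  -- basic constants
  have hπ : (0:ℝ) < Real.pi := Real.pi_pos
  set c := ∫ t : ℝ, ‖f t‖ with hc
  have hc0 : 0 ≤ c := integral_nonneg fun t => norm_nonneg _
  set β := Real.pi * ‖V‖ / η with hβdef
  have hβ0 : 0 ≤ β := by positivity
  have hcV : c * ‖V‖ ≤ β / 2 := by
    calc c * ‖V‖ ≤ Real.pi / (2 * η) * ‖V‖ :=
          mul_le_mul_of_nonneg_right hf_L1 (norm_nonneg V)
      _ = β / 2 := by rw [hβdef]; ring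
  have hγ0 : (0:ℝ) < γ := lt_of_le_of_lt (by positivity) hγ
  set u := Real.pi * (‖V‖ / (γ * η)) with hudef
  have hu0 : 0 ≤ u := by positivity
  have h4u : 4 * u < 1 := by
    have h1 : 4 * u = 4 * Real.pi * ‖V‖ / η / γ := by
      rw [hudef]
      field_simp
    rw [h1, div_lt_one hγ0]; exact hγ
  have hβγ : β / γ = u := by rw [hβdef, hudef]; ring
  -- integral helpers
  have hInt : ∀ M : 𝓗 →L[ℂ] 𝓗,
      Integrable fun t : ℝ => f t • (uexp H0 t * M * uexp H0 (-t)) :=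
    fun M => integrable_conj H0 hH0 hf M
  have hNorm : ∀ M : 𝓗 →L[ℂ] 𝓗,
      ‖∫ t : ℝ, f t • (uexp H0 t * M * uexp H0 (-t))‖ ≤ c * ‖M‖ :=
    fun M => norm_integral_conj_le H0 hH0 hf M
  have hPU : ∀ (l : Fin m) (t : ℝ), P l * uexp H0 t = uexp H0 t * P l :=
    fun l t => uexp_comm H0 (P l) (hP_comm l) t
  have hPP : ∀ k, P k * P k = P k := fun k => by simpa using hP_mul k k
  -- the integrand core operators
  set X : ℕ → Fin m → 𝓗 →L[ℂ] 𝓗 := fun j k =>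
    (1 - P k) * (-(V * Ω k j) + ∑ i ∈ Finset.Icc 1 j, Ω k i * V * Ω k (j - i)) * P k
    with hX
  have hΩrec' : ∀ k j, Ω k (j + 1) =
      ∫ t : ℝ, f t • (uexp H0 t * X j k * uexp H0 (-t)) := fun k j => hΩrec k j
  -- Ω k j * P l
  have hΩmulP : ∀ k j l, Ω k j * P l = if k = l then Ω k j else 0 := by
    intro k j l
    cases j with
    | zero =>
      rw [hΩ0 k, hP_mul k l]
    | succ j =>
      rw [hΩrec' k j, integral_mul (hInt (X j k)) (P l)]
      have hpt : ∀ t : ℝ, f t • (uexp H0 t * X j k * uexp H0 (-t)) * P l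
          = f t • (uexp H0 t * (X j k * P l) * uexp H0 (-t)) := by
        intro t
        rw [smul_mul_assoc]
        congr 1
        calc uexp H0 t * X j k * uexp H0 (-t) * P l
            = uexp H0 t * X j k * (uexp H0 (-t) * P l) := by rw [mul_assoc]
          _ = uexp H0 t * X j k * (P l * uexp H0 (-t)) := by rw [← hPU l (-t)]
          _ = uexp H0 t * (X j k * P l) * uexp H0 (-t) := by noncomm_ring
      simp only [hpt]
      by_cases hkl : k = l
      · subst hkl
        rw [if_pos rfl]
        have hXP : X j k * P k = X j k := by
          rw [hX]
          dsimp only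
          rw [mul_assoc, hPP k]
        rw [hXP, ← hΩrec' k j]
      · rw [if_neg hkl]
        have hXP : X j k * P l = 0 := by
          rw [hX]
          dsimp only
          rw [mul_assoc, hP_mul k l, if_neg hkl, mul_zero]
        rw [hXP]
        simp
  have hΩPself : ∀ k j, Ω k j * P k = Ω k j := by
    intro k j; rw [hΩmulP, if_pos rfl]
  -- P k * Ω k (j+1) = 0
  have hPΩ : ∀ k j, P k * Ω k (j + 1) = 0 := by
    intro k j
    rw [hΩrec' k j, mul_integral (hInt (X j k)) (P k)]
    have hPX : P k * X j k = 0 := by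
      rw [hX]
      dsimp only
      have h1 : P k * (1 - P k) = 0 := by
        rw [mul_sub, mul_one, hPP k, sub_self]
      calc P k * ((1 - P k) * (-(V * Ω k j) + ∑ i ∈ Finset.Icc 1 j,
              Ω k i * V * Ω k (j - i)) * P k)
          = P k * (1 - P k) * ((-(V * Ω k j) + ∑ i ∈ Finset.Icc 1 j,
              Ω k i * V * Ω k (j - i)) * P k) := by noncomm_ring
        _ = 0 := by rw [h1, zero_mul]
    have hpt : ∀ t : ℝ, P k * (f t • (uexp H0 t * X j k * uexp H0 (-t))) = 0 := by
      intro t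
      rw [mul_smul_comm]
      have : P k * (uexp H0 t * X j k * uexp H0 (-t))
          = uexp H0 t * (P k * X j k) * uexp H0 (-t) := by
        calc P k * (uexp H0 t * X j k * uexp H0 (-t))
            = (P k * uexp H0 t) * X j k * uexp H0 (-t) := by noncomm_ring
          _ = (uexp H0 t * P k) * X j k * uexp H0 (-t) := by rw [hPU k t]
          _ = uexp H0 t * (P k * X j k) * uexp H0 (-t) := by noncomm_ring
      rw [this, hPX, mul_zero, zero_mul, smul_zero]
    simp only [hpt]
    simp
  -- the summed operators
  set S : ℕ → 𝓗 →L[ℂ] 𝓗 := fun j => ∑ k, Ω k j with hSdef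
  have hS0 : S 0 = 1 := by
    rw [hSdef]
    dsimp only
    rw [Finset.sum_congr rfl fun k _ => hΩ0 k]
    exact hP_sum
  have hSP : ∀ j k, S j * P k = Ω k j := by
    intro j k
    rw [hSdef]
    dsimp only
    rw [Finset.sum_mul, Finset.sum_eq_single k]
    · exact hΩPself k j
    · intro l _ hlk
      rw [hΩmulP, if_neg hlk]
    · intro h; exact absurd (Finset.mem_univ k) h
  have hΩeq : ∀ k j, Ω k j = S j * P k := fun k j => (hSP j k).symm
  -- block diagonal compression
  set D : (𝓗 →L[ℂ] 𝓗) → 𝓗 →L[ℂ] 𝓗 := fun W => ∑ k, P k * W * P k with hD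
  have hDle : ∀ W, ‖D W‖ ≤ ‖W‖ := fun W =>
    norm_blockdiag_le P hP_adj hP_mul hP_sum W
  -- per-k structural identity
  have hXk : ∀ j k, X j k = -(V * Ω k j) + P k * ((V * S j) * P k)
      + ∑ i ∈ Finset.Icc 1 j, S i * (P k * ((V * S (j - i)) * P k)) := by
    intro j k
    set A := -(V * Ω k j) + ∑ i ∈ Finset.Icc 1 j, Ω k i * V * Ω k (j - i) with hA
    have hAP : A * P k = A := by
      rw [hA, add_mul, neg_mul, mul_assoc, hΩPself k j, Finset.sum_mul]
      congr 1
      refine Finset.sum_congr rfl fun i _ => ?_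
      rw [mul_assoc, hΩPself]
    have hPA : P k * A = -(P k * (V * Ω k j)) := by
      rw [hA, mul_add, mul_neg]
      have hz : P k * (∑ i ∈ Finset.Icc 1 j, Ω k i * V * Ω k (j - i)) = 0 := by
        rw [Finset.mul_sum]
        refine Finset.sum_eq_zero fun i hi => ?_
        rw [Finset.mem_Icc] at hi
        obtain ⟨i', rfl⟩ : ∃ i', i = i' + 1 := ⟨i - 1, by omega⟩
        calc P k * (Ω k (i' + 1) * V * Ω k (j - (i' + 1)))
            = P k * Ω k (i' + 1) * V * Ω k (j - (i' + 1)) := by noncomm_ring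
          _ = 0 := by rw [hPΩ k i', zero_mul, zero_mul]
      rw [hz, add_zero]
    have step : X j k = A + P k * (V * Ω k j) := by
      rw [hX]
      dsimp only
      rw [← hA]
      calc (1 - P k) * A * P k = A * P k - P k * (A * P k) := by noncomm_ring
        _ = A - P k * A := by rw [hAP]
        _ = A + P k * (V * Ω k j) := by rw [hPA, sub_neg_eq_add]
    rw [step, hA]
    have h1 : P k * (V * Ω k j) = P k * ((V * S j) * P k) := by
      rw [hΩeq k j]
      noncomm_ring
    have h2 : ∀ i ∈ Finset.Icc 1 j, Ω k i * V * Ω k (j - i)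
        = S i * (P k * ((V * S (j - i)) * P k)) := by
      intro i hi
      rw [Finset.mem_Icc] at hi
      have e1 := hΩeq k i
      have e2 := hΩeq k (j - i)
      rw [e1, e2]
      noncomm_ring
    rw [Finset.sum_congr rfl h2, h1]
    abel
  -- sum identity
  have hXsum : ∀ j, (∑ k, X j k) = -(V * S j) + D (V * S j)
      + ∑ i ∈ Finset.Icc 1 j, S i * D (V * S (j - i)) := by
    intro j
    rw [Finset.sum_congr rfl fun k _ => hXk j k]
    rw [Finset.sum_add_distrib, Finset.sum_add_distrib]
    have e1 : ∑ k, -(V * Ω k j) = -(V * S j) := by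
      calc ∑ k, -(V * Ω k j) = -∑ k, V * Ω k j := by rw [← Finset.sum_neg_distrib]
        _ = -(V * ∑ k, Ω k j) := by rw [Finset.mul_sum]
        _ = -(V * S j) := rfl
    have e2 : ∀ W : 𝓗 →L[ℂ] 𝓗, ∑ k, P k * (W * P k) = D W := by
      intro W
      rw [hD]
      exact Finset.sum_congr rfl fun k _ => (mul_assoc _ _ _).symm
    have e3 : ∑ k, ∑ i ∈ Finset.Icc 1 j, S i * (P k * ((V * S (j - i)) * P k))
        = ∑ i ∈ Finset.Icc 1 j, S i * D (V * S (j - i)) := by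
      rw [Finset.sum_comm]
      refine Finset.sum_congr rfl fun i _ => ?_
      rw [← Finset.mul_sum, e2]
    rw [e1, e2, e3]
  -- recursion for S
  have hSrec : ∀ j, S (j + 1) =
      ∫ t : ℝ, f t • (uexp H0 t * (∑ k, X j k) * uexp H0 (-t)) := by
    intro j
    calc S (j + 1) = ∑ k, Ω k (j + 1) := rfl
      _ = ∑ k, ∫ t : ℝ, f t • (uexp H0 t * X j k * uexp H0 (-t)) :=
          Finset.sum_congr rfl fun k _ => hΩrec' k j
      _ = ∫ t : ℝ, ∑ k, f t • (uexp H0 t * X j k * uexp H0 (-t)) :=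
          (integral_finset_sum Finset.univ fun k _ => hInt (X j k)).symm
      _ = ∫ t : ℝ, f t • (uexp H0 t * (∑ k, X j k) * uexp H0 (-t)) := by
          congr 1
          funext t
          rw [Finset.mul_sum, Finset.sum_mul, Finset.smul_sum]
  -- norm recursions
  have hSnorm : ∀ j, ‖S j‖ ≤ β ^ j * catalan j := by
    refine catalan_rec_bound β hβ0 (fun j => ‖S j‖) ?_ (fun j => norm_nonneg _) ?_
    · show ‖S 0‖ ≤ 1
      rw [hS0]; exact norm_one_le'
    · intro j
      show ‖S (j + 1)‖ ≤ β / 2 * (2 * ‖S j‖ + ∑ i ∈ Finset.Icc 1 j, ‖S i‖ * ‖S (j - i)‖)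
      have h1 : ‖S (j + 1)‖ ≤ c * ‖∑ k, X j k‖ := by
        rw [hSrec j]; exact hNorm _
      have h2 : ‖∑ k, X j k‖ ≤ ‖V‖ * ‖S j‖ + ‖V‖ * ‖S j‖
          + ∑ i ∈ Finset.Icc 1 j, ‖S i‖ * (‖V‖ * ‖S (j - i)‖) := by
        rw [hXsum j]
        refine le_trans (norm_add_le _ _) (add_le_add ?_ ?_)
        · refine le_trans (norm_add_le _ _) ?_
          have h3 : ‖V * S j‖ ≤ ‖V‖ * ‖S j‖ := norm_mul_le _ _
          have h4 : ‖D (V * S j)‖ ≤ ‖V‖ * ‖S j‖ := (hDle _).trans h3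
          rw [norm_neg]
          exact add_le_add h3 h4
        · refine le_trans (norm_sum_le _ _) (Finset.sum_le_sum fun i _ => ?_)
          calc ‖S i * D (V * S (j - i))‖ ≤ ‖S i‖ * ‖D (V * S (j - i))‖ := norm_mul_le _ _
            _ ≤ ‖S i‖ * (‖V‖ * ‖S (j - i)‖) :=
              mul_le_mul_of_nonneg_left ((hDle _).trans (norm_mul_le _ _)) (norm_nonneg _)
      have h5 : ‖V‖ * ‖S j‖ + ‖V‖ * ‖S j‖
          + ∑ i ∈ Finset.Icc 1 j, ‖S i‖ * (‖V‖ * ‖S (j - i)‖)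
          = ‖V‖ * (2 * ‖S j‖ + ∑ i ∈ Finset.Icc 1 j, ‖S i‖ * ‖S (j - i)‖) := by
        have h6 : ∑ i ∈ Finset.Icc 1 j, ‖S i‖ * (‖V‖ * ‖S (j - i)‖)
            = ‖V‖ * ∑ i ∈ Finset.Icc 1 j, ‖S i‖ * ‖S (j - i)‖ := by
          rw [Finset.mul_sum]
          exact Finset.sum_congr rfl fun i _ => by ring
        rw [h6]; ring
      have hbr : (0:ℝ) ≤ 2 * ‖S j‖ + ∑ i ∈ Finset.Icc 1 j, ‖S i‖ * ‖S (j - i)‖ := by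
        have : (0:ℝ) ≤ ∑ i ∈ Finset.Icc 1 j, ‖S i‖ * ‖S (j - i)‖ :=
          Finset.sum_nonneg fun i _ => mul_nonneg (norm_nonneg _) (norm_nonneg _)
        linarith [norm_nonneg (S j)]
      calc ‖S (j + 1)‖ ≤ c * ‖∑ k, X j k‖ := h1
        _ ≤ c * (‖V‖ * (2 * ‖S j‖ + ∑ i ∈ Finset.Icc 1 j, ‖S i‖ * ‖S (j - i)‖)) :=
            mul_le_mul_of_nonneg_left (h2.trans_eq h5) hc0
        _ = (c * ‖V‖) * (2 * ‖S j‖ + ∑ i ∈ Finset.Icc 1 j, ‖S i‖ * ‖S (j - i)‖) := by ring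
        _ ≤ β / 2 * (2 * ‖S j‖ + ∑ i ∈ Finset.Icc 1 j, ‖S i‖ * ‖S (j - i)‖) :=
            mul_le_mul_of_nonneg_right hcV hbr
  have hΩnorm : ∀ k j, ‖Ω k j‖ ≤ β ^ j * catalan j := by
    intro k
    have hPk1 : ‖P k‖ ≤ 1 := norm_proj_le (P k) (hP_adj k) (hPP k)
    have hQadj : adjoint (1 - P k) = 1 - P k := by
      rw [← ContinuousLinearMap.star_eq_adjoint, star_sub, star_one,
        ContinuousLinearMap.star_eq_adjoint, hP_adj k]
    have hQidem : (1 - P k) * (1 - P k) = 1 - P k := by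
      have h0 : (1 - P k) * (1 - P k) = 1 - P k - P k + P k * P k := by noncomm_ring
      rw [h0, hPP k]; abel
    have hQ1 : ‖(1:𝓗 →L[ℂ] 𝓗) - P k‖ ≤ 1 := norm_proj_le _ hQadj hQidem
    refine catalan_rec_bound β hβ0 (fun j => ‖Ω k j‖) ?_ (fun j => norm_nonneg _) ?_
    · show ‖Ω k 0‖ ≤ 1
      rw [hΩ0]; exact hPk1
    · intro j
      show ‖Ω k (j + 1)‖ ≤ β / 2 * (2 * ‖Ω k j‖ + ∑ i ∈ Finset.Icc 1 j, ‖Ω k i‖ * ‖Ω k (j - i)‖)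
      have h1 : ‖Ω k (j + 1)‖ ≤ c * ‖X j k‖ := by
        rw [hΩrec' k j]; exact hNorm _
      have hAnorm : ‖-(V * Ω k j) + ∑ i ∈ Finset.Icc 1 j, Ω k i * V * Ω k (j - i)‖
          ≤ ‖V‖ * ‖Ω k j‖ + ∑ i ∈ Finset.Icc 1 j, ‖Ω k i‖ * (‖V‖ * ‖Ω k (j - i)‖) := by
        refine le_trans (norm_add_le _ _) (add_le_add ?_ ?_)
        · rw [norm_neg]; exact norm_mul_le _ _
        · refine le_trans (norm_sum_le _ _) (Finset.sum_le_sum fun i _ => ?_)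
          calc ‖Ω k i * V * Ω k (j - i)‖ ≤ ‖Ω k i * V‖ * ‖Ω k (j - i)‖ := norm_mul_le _ _
            _ ≤ (‖Ω k i‖ * ‖V‖) * ‖Ω k (j - i)‖ :=
              mul_le_mul_of_nonneg_right (norm_mul_le _ _) (norm_nonneg _)
            _ = ‖Ω k i‖ * (‖V‖ * ‖Ω k (j - i)‖) := by ring
      have h2 : ‖X j k‖ ≤ ‖V‖ * ‖Ω k j‖
          + ∑ i ∈ Finset.Icc 1 j, ‖Ω k i‖ * (‖V‖ * ‖Ω k (j - i)‖) := by
        rw [hX]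
        dsimp only
        set A := -(V * Ω k j) + ∑ i ∈ Finset.Icc 1 j, Ω k i * V * Ω k (j - i) with hA
        calc ‖(1 - P k) * A * P k‖ ≤ ‖(1 - P k) * A‖ * ‖P k‖ := norm_mul_le _ _
          _ ≤ ‖(1 - P k) * A‖ * 1 := mul_le_mul_of_nonneg_left hPk1 (norm_nonneg _)
          _ = ‖(1 - P k) * A‖ := mul_one _
          _ ≤ ‖(1:𝓗 →L[ℂ] 𝓗) - P k‖ * ‖A‖ := norm_mul_le _ _
          _ ≤ 1 * ‖A‖ := mul_le_mul_of_nonneg_right hQ1 (norm_nonneg _)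
          _ = ‖A‖ := one_mul _
          _ ≤ _ := hAnorm
      have h5 : ‖V‖ * ‖Ω k j‖ + ∑ i ∈ Finset.Icc 1 j, ‖Ω k i‖ * (‖V‖ * ‖Ω k (j - i)‖)
          ≤ ‖V‖ * (2 * ‖Ω k j‖ + ∑ i ∈ Finset.Icc 1 j, ‖Ω k i‖ * ‖Ω k (j - i)‖) := by
        have h6 : ∑ i ∈ Finset.Icc 1 j, ‖Ω k i‖ * (‖V‖ * ‖Ω k (j - i)‖)
            = ‖V‖ * ∑ i ∈ Finset.Icc 1 j, ‖Ω k i‖ * ‖Ω k (j - i)‖ := by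
          rw [Finset.mul_sum]
          exact Finset.sum_congr rfl fun i _ => by ring
        rw [h6]
        nlinarith [mul_nonneg (norm_nonneg V) (norm_nonneg (Ω k j))]
      have hbr : (0:ℝ) ≤ 2 * ‖Ω k j‖ + ∑ i ∈ Finset.Icc 1 j, ‖Ω k i‖ * ‖Ω k (j - i)‖ := by
        have : (0:ℝ) ≤ ∑ i ∈ Finset.Icc 1 j, ‖Ω k i‖ * ‖Ω k (j - i)‖ :=
          Finset.sum_nonneg fun i _ => mul_nonneg (norm_nonneg _) (norm_nonneg _)
        linarith [norm_nonneg (Ω k j)]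
      calc ‖Ω k (j + 1)‖ ≤ c * ‖X j k‖ := h1
        _ ≤ c * (‖V‖ * (2 * ‖Ω k j‖ + ∑ i ∈ Finset.Icc 1 j, ‖Ω k i‖ * ‖Ω k (j - i)‖)) :=
            mul_le_mul_of_nonneg_left (h2.trans h5) hc0
        _ = (c * ‖V‖) * (2 * ‖Ω k j‖ + ∑ i ∈ Finset.Icc 1 j, ‖Ω k i‖ * ‖Ω k (j - i)‖) := by
            ring
        _ ≤ β / 2 * (2 * ‖Ω k j‖ + ∑ i ∈ Finset.Icc 1 j, ‖Ω k i‖ * ‖Ω k (j - i)‖) :=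
            mul_le_mul_of_nonneg_right hcV hbr
  -- summability of the Catalan series
  have hcat_nn : ∀ j : ℕ, (0:ℝ) ≤ (catalan j : ℝ) * u ^ j := fun j => by positivity
  have hcat_sum : Summable fun j : ℕ => (catalan j : ℝ) * u ^ j :=
    summable_of_sum_range_le hcat_nn (fun N => catalan_partial_le hu0 h4u.le N)
  have hcat_tsum : (∑' j : ℕ, (catalan j : ℝ) * u ^ j)
      ≤ 2 / (1 + Real.sqrt (1 - 4 * u)) :=
    Real.tsum_le_of_sum_range_le hcat_nn (fun N => catalan_partial_le hu0 h4u.le N)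
  -- scaling bound
  have hscal : ∀ j : ℕ, (γ ^ j)⁻¹ * (β ^ j * catalan j) = (catalan j : ℝ) * u ^ j := by
    intro j
    rw [← hβγ, div_pow]
    ring
  have hγjinv : ∀ j : ℕ, ‖((γ:ℂ) ^ j)⁻¹‖ = (γ ^ j)⁻¹ := by
    intro j
    rw [norm_inv, norm_pow, Complex.norm_real, Real.norm_eq_abs, abs_of_pos hγ0]
  have hterm : ∀ k j, ‖((γ:ℂ) ^ j)⁻¹ • Ω k j‖ ≤ (catalan j : ℝ) * u ^ j := by
    intro k j
    rw [norm_smul, hγjinv j, ← hscal j]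
    exact mul_le_mul_of_nonneg_left (hΩnorm k j) (by positivity)
  have hsummable_norm : ∀ k, Summable fun j : ℕ => ‖((γ:ℂ) ^ j)⁻¹ • Ω k j‖ :=
    fun k => Summable.of_nonneg_of_le (fun j => norm_nonneg _) (fun j => hterm k j) hcat_sum
  have hsummable : ∀ k, Summable fun j : ℕ => ((γ:ℂ) ^ j)⁻¹ • Ω k j :=
    fun k => (hsummable_norm k).of_norm
  -- facts about the scaled sums
  have hTnorm : ∀ j : ℕ, ‖((γ:ℂ) ^ j)⁻¹ • S j‖ ≤ (catalan j : ℝ) * u ^ j := by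
    intro j
    rw [norm_smul, hγjinv j, ← hscal j]
    exact mul_le_mul_of_nonneg_left (hSnorm j) (by positivity)
  have hTsum_norm : Summable fun j : ℕ => ‖((γ:ℂ) ^ j)⁻¹ • S j‖ :=
    Summable.of_nonneg_of_le (fun _ => norm_nonneg _) hTnorm hcat_sum
  have hTsum : Summable fun j : ℕ => ((γ:ℂ) ^ j)⁻¹ • S j := hTsum_norm.of_norm
  have hswap : (∑ k, ∑' j : ℕ, ((γ:ℂ) ^ j)⁻¹ • Ω k j)
      = ∑' j : ℕ, ((γ:ℂ) ^ j)⁻¹ • S j := by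
    rw [← Summable.tsum_finsetSum (fun k _ => hsummable k)]
    congr 1
    funext j
    rw [← Finset.smul_sum]
  have hT0 : ((γ:ℂ) ^ (0:ℕ))⁻¹ • S 0 = 1 := by
    rw [pow_zero, inv_one, one_smul, hS0]
  have hsplit : (∑' j : ℕ, ((γ:ℂ) ^ j)⁻¹ • S j) - 1
      = ∑' j : ℕ, ((γ:ℂ) ^ (j + 1))⁻¹ • S (j + 1) := by
    rw [hTsum.tsum_eq_zero_add, hT0, add_sub_cancel_left]
  have hbound : ‖(∑ k, ∑' j : ℕ, ((γ:ℂ) ^ j)⁻¹ • Ω k j) - 1‖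
      ≤ (∑' j : ℕ, (catalan j : ℝ) * u ^ j) - 1 := by
    rw [hswap, hsplit]
    have hsm : Summable fun j : ℕ => ‖((γ:ℂ) ^ (j + 1))⁻¹ • S (j + 1)‖ :=
      (summable_nat_add_iff 1).mpr hTsum_norm
    have hsc : Summable fun j : ℕ => (catalan (j + 1) : ℝ) * u ^ (j + 1) :=
      (summable_nat_add_iff 1).mpr hcat_sum
    refine le_trans (norm_tsum_le_tsum_norm hsm) ?_
    refine le_trans (Summable.tsum_le_tsum (fun j => hTnorm (j + 1)) hsm hsc) ?_
    have h7 := hcat_sum.tsum_eq_zero_add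
    simp only [catalan_zero, Nat.cast_one, pow_zero, mul_one, one_mul] at h7
    linarith
  have h4eq : 4 * Real.pi * (‖V‖ / (γ * η)) = 4 * u := by rw [hudef]; ring
  have hfinal : ((∑' j : ℕ, (catalan j : ℝ) * u ^ j) - 1
        ≤ (1 - Real.sqrt (1 - 4 * u)) ^ 2 / (4 * u))
      ∧ (1 - Real.sqrt (1 - 4 * u)) ^ 2 / (4 * u) < 1 := by
    rcases eq_or_lt_of_le hu0 with hu0' | hupos
    · have htz : (∑' j : ℕ, (catalan j : ℝ) * u ^ j) = 1 := by
        rw [← hu0']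
        rw [tsum_eq_single 0]
        · simp
        · intro j hj
          rw [zero_pow hj, mul_zero]
      rw [htz, ← hu0']
      norm_num [Real.sqrt_one]
    · set sq := Real.sqrt (1 - 4 * u) with hsq
      have hs0 : 0 ≤ sq := Real.sqrt_nonneg _
      have hs2 : sq ^ 2 = 1 - 4 * u := Real.sq_sqrt (by linarith)
      have hspos : 0 < sq := Real.sqrt_pos.mpr (by linarith)
      have hs1 : sq < 1 := by nlinarith
      have hGm1 : 2 / (1 + sq) - 1 = (1 - sq) ^ 2 / (4 * u) := by
        have hd1 : (1:ℝ) + sq ≠ 0 := by linarith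
        have hd2 : (4:ℝ) * u ≠ 0 := by linarith
        field_simp
        nlinarith
      constructor
      · calc (∑' j : ℕ, (catalan j : ℝ) * u ^ j) - 1
            ≤ 2 / (1 + sq) - 1 := by linarith [hcat_tsum]
          _ = (1 - sq) ^ 2 / (4 * u) := hGm1
      · rw [div_lt_one (by linarith : (0:ℝ) < 4 * u)]
        nlinarith
  refine ⟨hsummable_norm, hsummable, ?_, ?_⟩
  · rw [h4eq]
    exact hbound.trans hfinal.1
  · rw [h4eq]
    exact hfinal.2
end CatalanAux
end

section
/- Let H be a bounded self-adjoint operator on a complex Hilbert space, {P_k}_{k=1,…,m} a complete orthogonal family of projections, and Ω_1,…,Ω_m bounded operators solving the Bloch equations for H and {P_k}. Fix k, and suppose S_k is a bounded operator with S_k† = S_k, S_k = P_k S_k P_k, and S_k (Ω_k† Ω_k) = P_k = (Ω_k† Ω_k) S_k (i.e. S_k inverts Ω_k†Ω_k on ran P_k). Then the operator P̃_k = Ω_k S_k Ω_k† satisfies: P̃_k† = P̃_k, P̃_k² = P̃_k, and H P̃_k = P̃_k H. -/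
open ContinuousLinearMap

/-- **The perturbed spectral projections.**
Let `Hop` be a bounded self-adjoint operator, `{P k}` a complete orthogonal family of
projections, and `Ω k` solutions of the Bloch equations. If `S` is a bounded self-adjoint
operator supported on `ran (P k)` which inverts `Ω k† Ω k` there, then
`P̃ = Ω k * S * (Ω k)†` is a Hermitian projection commuting with `Hop`. -/
theorem perturbed_projection_properties
    {𝓗 : Type*} [NormedAddCommGroup 𝓗] [InnerProductSpace ℂ 𝓗] [CompleteSpace 𝓗]
    (m : ℕ) (Hop : 𝓗 →L[ℂ] 𝓗) (hH : IsSelfAdjoint Hop)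
    (P : Fin m → 𝓗 →L[ℂ] 𝓗) (Ω : Fin m → 𝓗 →L[ℂ] 𝓗)
    (hP_adj : ∀ k, adjoint (P k) = P k)
    (hP_mul : ∀ k l, P k * P l = if k = l then P k else 0)
    (hP_sum : ∑ k, P k = 1)
    (hBloch1 : ∀ k, Hop * Ω k = Ω k * Hop * Ω k)
    (hBloch2 : ∀ k, Ω k * P k = Ω k)
    (hBloch3 : ∀ k, P k * Ω k = P k)
    (k : Fin m) (S : 𝓗 →L[ℂ] 𝓗)
    (hS_adj : adjoint S = S)
    (hS_supp : S = P k * S * P k)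
    (hS_invl : S * (adjoint (Ω k) * Ω k) = P k)
    (hS_invr : (adjoint (Ω k) * Ω k) * S = P k) :
    adjoint (Ω k * S * adjoint (Ω k)) = Ω k * S * adjoint (Ω k) ∧
    (Ω k * S * adjoint (Ω k)) * (Ω k * S * adjoint (Ω k)) = Ω k * S * adjoint (Ω k) ∧
    Hop * (Ω k * S * adjoint (Ω k)) = (Ω k * S * adjoint (Ω k)) * Hop := by
  set A := Ω k with hA
  set T := A * S * adjoint A with hT
  clear_value T
  -- P k is idempotent
  have hPk : P k * P k = P k := by simpa using hP_mul k k
  -- P k * S = S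
  have hPS : P k * S = S := by
    calc P k * S = P k * (P k * S * P k) := by rw [← hS_supp]
    _ = (P k * P k) * S * P k := by rw [← mul_assoc, ← mul_assoc]
    _ = P k * S * P k := by rw [hPk]
    _ = S := (hS_supp).symm
  -- adjoint facts
  have hHs : adjoint Hop = Hop := hH.adjoint_eq
  have hadjT : adjoint T = T := by
    rw [hT, ← star_eq_adjoint, ← star_eq_adjoint, star_mul, star_mul, star_star]
    rw [star_eq_adjoint, star_eq_adjoint, hS_adj, mul_assoc]
  -- T * A = A
  have hTA : T * A = A := by
    calc T * A = A * (S * (adjoint A * A)) := by rw [hT]; noncomm_ring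
    _ = A * P k := by rw [hS_invl]
    _ = A := hBloch2 k
  -- P k * adjoint A = adjoint A
  have hPAdj : P k * adjoint A = adjoint A := by
    have h := congrArg star (hBloch2 k)
    rw [star_mul] at h
    simpa [star_eq_adjoint, hP_adj k] using h
  -- adjoint A * T = adjoint A
  have hAT : adjoint A * T = adjoint A := by
    calc adjoint A * T = (adjoint A * A * S) * adjoint A := by rw [hT]; noncomm_ring
    _ = P k * adjoint A := by rw [hS_invr]
    _ = adjoint A := hPAdj
  -- idempotence
  have hidem : T * T = T := by
    calc T * T = (T * A) * (S * adjoint A) := by rw [hT]; noncomm_ring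
    _ = A * (S * adjoint A) := by rw [hTA]
    _ = T := by rw [hT, mul_assoc]
  -- H T = T H T
  have hHT : Hop * T = T * (Hop * T) := by
    calc Hop * T = (Hop * A) * (S * adjoint A) := by rw [hT]; noncomm_ring
    _ = (A * Hop * A) * (S * adjoint A) := by rw [hBloch1 k]
    _ = ((T * A) * Hop * A) * (S * adjoint A) := by rw [hTA]
    _ = T * ((A * Hop * A) * (S * adjoint A)) := by noncomm_ring
    _ = T * ((Hop * A) * (S * adjoint A)) := by rw [← hBloch1 k]
    _ = T * (Hop * T) := by rw [hT]; noncomm_ring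
  -- commutation, by taking adjoints
  have hcomm : Hop * T = T * Hop := by
    have h1 : Hop * T = T * Hop * T := by rw [hHT]; noncomm_ring
    have h2 : T * Hop = adjoint (Hop * T) := by
      rw [← star_eq_adjoint, star_mul, star_eq_adjoint, star_eq_adjoint, hHs, hadjT]
    have h3 : adjoint (T * Hop * T) = T * Hop * T := by
      rw [← star_eq_adjoint, star_mul, star_mul]
      simp [star_eq_adjoint, hHs, hadjT, mul_assoc]
    rw [h2, h1, h3]
  exact ⟨hadjT, hidem, hcomm⟩
end
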